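/- If two quasi-polynomial functions on a lattice L ≅ ℤ^n agree on the set of lattice points in s + τ for some point s and some open (full-dimensional) polyhedral cone τ, then they are equal on all of L. -/

import Mathlib

/-!
The difference `p` of the two quasi-polynomials is again a quasi-polynomial, with some period `q`,
and it vanishes on the lattice points of `s + τ`. Clearing denominators of a rational point of
the open cone `τ` gives an integer direction `d` in `τ`. For any lattice point `x₀`, the points
`x₀ + k q d` (`k ∈ ℤ`) lie in the residue class of `x₀` modulo `q`, so there `p` is the restriction
of one polynomial `P`, and `t ↦ P (x₀ + t q d)` is a one-variable polynomial. For `k ≫ 0` these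
points lie in `s + τ`, so this polynomial has infinitely many roots; hence it is zero, and
evaluating at `t = 0` gives `p x₀ = 0`.
-/

/-- A quasi-polynomial (periodic polynomial) function on the lattice `ℤ^n`: there is a
period `q > 0` such that on each coset of `q·ℤ^n` the function is given by a polynomial. -/
def IsQuasiPolynomial {n : ℕ} (p : (Fin n → ℤ) → ℚ) : Prop :=
  ∃ q : ℤ, 0 < q ∧ ∀ r : Fin n → ℤ, ∃ P : MvPolynomial (Fin n) ℚ,
    ∀ x : Fin n → ℤ, (∀ i, x i % q = r i % q) →
      p x = MvPolynomial.eval (fun i => (x i : ℚ)) P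

open Filter

theorem exists_nat_mul_eq_intCast {κ : Type*} [Fintype κ] (y : κ → ℚ) :
    ∃ N : ℕ, 0 < N ∧ ∃ d : κ → ℤ, ∀ i, (d i : ℚ) = N * y i := by
  set N := ∏ i, (y i).den
  refine ⟨N, Finset.prod_pos fun i _ => (y i).pos, fun i => (y i).num * (N / (y i).den : ℕ),
    fun i => ?_⟩
  have hdvd : (y i).den ∣ N := Finset.dvd_prod_of_mem _ (Finset.mem_univ i)
  have hN : (N : ℚ) = (N / (y i).den : ℕ) * (y i).den := by
    exact_mod_cast (Nat.div_mul_cancel hdvd).symm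
  rw [hN, Int.cast_mul, Int.cast_natCast, ← Rat.mul_den_eq_num]
  ring

theorem exists_intCast_mem_of_nonempty_openCone {ι κ : Type*} [Fintype κ] {A : Finset ι}
    {c : ι → κ → ℚ} (h : ∃ y, ∀ a ∈ A, 0 < c a ⬝ᵥ y) :
    ∃ d : κ → ℤ, ∀ a ∈ A, 0 < c a ⬝ᵥ fun i => (d i : ℚ) := by
  obtain ⟨y, hy⟩ := h
  obtain ⟨N, hN, d, hd⟩ := exists_nat_mul_eq_intCast y
  have hdy : (fun i => (d i : ℚ)) = (N : ℚ) • y := funext hd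
  refine ⟨d, fun a ha => ?_⟩
  rw [hdy, dotProduct_smul, smul_eq_mul]
  exact mul_pos (Nat.cast_pos.mpr hN) (hy a ha)

theorem eventually_forall_pos_dotProduct_add_intCast_smul {𝕜 ι κ : Type*} [Field 𝕜]
    [LinearOrder 𝕜] [IsStrictOrderedRing 𝕜] [Archimedean 𝕜] [Fintype κ] {A : Finset ι}
    {c : ι → κ → 𝕜} {v : κ → 𝕜} (hv : ∀ a ∈ A, 0 < c a ⬝ᵥ v) (z : κ → 𝕜) :
    ∀ᶠ k : ℤ in atTop, ∀ a ∈ A, 0 < c a ⬝ᵥ (z + (k : 𝕜) • v) := by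
  rw [eventually_all_finset]
  intro a ha
  simp only [dotProduct_add, dotProduct_smul, smul_eq_mul]
  exact (tendsto_atTop_add_const_left _ _
    (tendsto_intCast_atTop_atTop.atTop_mul_const (hv a ha))).eventually_gt_atTop 0

namespace MvPolynomial

variable {R σ : Type*} [CommRing R]

noncomputable def restrictLine (P : MvPolynomial σ R) (x v : σ → R) : Polynomial R :=
  aeval (fun i => Polynomial.C (x i) + Polynomial.X * Polynomial.C (v i)) P

theorem eval_restrictLine (P : MvPolynomial σ R) (x v : σ → R) (t : R) :
    (P.restrictLine x v).eval t = eval (x + t • v) P := by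
  rw [restrictLine, ← Polynomial.coe_aeval_eq_eval, ← AlgHom.comp_apply, comp_aeval,
    aeval_eq_eval]
  congr 2
  funext i
  simp only [map_add, map_mul, Polynomial.aeval_C, Polynomial.aeval_X, Algebra.algebraMap_self,
    RingHom.id_apply, Pi.add_apply, Pi.smul_apply, smul_eq_mul]

theorem eval_eq_zero_of_frequently_eval_add_intCast_smul_eq_zero [IsDomain R] [CharZero R]
    {P : MvPolynomial σ R} {x v : σ → R}
    (h : ∃ᶠ k : ℤ in atTop, eval (x + (k : R) • v) P = 0) : eval x P = 0 := by
  have hroots : {k : ℤ | eval (x + (k : R) • v) P = 0}.Infinite :=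
    frequently_cofinite_iff_infinite.mp (h.filter_mono atTop_le_cofinite)
  have hzero : P.restrictLine x v = 0 := by
    refine Polynomial.eq_zero_of_infinite_isRoot _
      ((hroots.image Int.cast_injective.injOn).mono ?_)
    rintro _ ⟨k, hk, rfl⟩
    simpa [Polynomial.IsRoot, eval_restrictLine] using hk
  simpa [eval_restrictLine] using congrArg (Polynomial.eval 0) hzero

end MvPolynomial

namespace IsQuasiPolynomial

variable {n : ℕ} {p p₁ p₂ : (Fin n → ℤ) → ℚ}

theorem sub (h₁ : IsQuasiPolynomial p₁) (h₂ : IsQuasiPolynomial p₂) :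
    IsQuasiPolynomial (p₁ - p₂) := by
  obtain ⟨q₁, hq₁, H₁⟩ := h₁
  obtain ⟨q₂, hq₂, H₂⟩ := h₂
  refine ⟨q₁ * q₂, mul_pos hq₁ hq₂, fun r => ?_⟩
  obtain ⟨P₁, hP₁⟩ := H₁ r
  obtain ⟨P₂, hP₂⟩ := H₂ r
  refine ⟨P₁ - P₂, fun x hx => ?_⟩
  rw [Pi.sub_apply, map_sub, hP₁ x fun i => Int.ModEq.of_mul_right q₂ (hx i),
    hP₂ x fun i => Int.ModEq.of_mul_left q₁ (hx i)]

open MvPolynomial in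
theorem eq_zero_of_forall_mem_translated_openCone (hp : IsQuasiPolynomial p) {ι : Type*}
    {A : Finset ι} {c : ι → Fin n → ℚ} (hne : ∃ y, ∀ a ∈ A, 0 < c a ⬝ᵥ y) (s : Fin n → ℚ)
    (h : ∀ x : Fin n → ℤ, (∀ a ∈ A, 0 < c a ⬝ᵥ fun i => (x i : ℚ) - s i) → p x = 0) :
    p = 0 := by
  obtain ⟨d, hd⟩ := exists_intCast_mem_of_nonempty_openCone hne
  obtain ⟨q, hq, H⟩ := hp
  funext x₀
  obtain ⟨P, hP⟩ := H x₀
  set v : Fin n → ℤ := q • d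
  have hv : ∀ a ∈ A, 0 < c a ⬝ᵥ fun i => (v i : ℚ) := fun a ha => by
    have hvd : (fun i => (v i : ℚ)) = (q : ℚ) • fun i => (d i : ℚ) := by
      funext i; simp [v]
    rw [hvd, dotProduct_smul, smul_eq_mul]
    exact mul_pos (Int.cast_pos.mpr hq) (hd a ha)
  have hcast : ∀ k : ℤ, (fun i => ((x₀ + k • v) i : ℚ))
      = (fun i => (x₀ i : ℚ)) + (k : ℚ) • fun i => (v i : ℚ) := fun k => by
    funext i; simp
  have hcone : ∀ᶠ k : ℤ in atTop, ∀ a ∈ A, 0 < c a ⬝ᵥ fun i => ((x₀ + k • v) i : ℚ) - s i := by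
    refine (eventually_forall_pos_dotProduct_add_intCast_smul hv
      ((fun i => (x₀ i : ℚ)) - s)).mono fun k hk => ?_
    rwa [sub_add_eq_add_sub, ← hcast] at hk
  have hline : ∃ᶠ k : ℤ in atTop,
      eval ((fun i => (x₀ i : ℚ)) + (k : ℚ) • fun i => (v i : ℚ)) P = 0 := by
    refine hcone.frequently.mono fun k hk => ?_
    have hres : ∀ i, (x₀ + k • v) i % q = x₀ i % q := fun i =>
      Int.add_modEq_left_iff.mpr ((dvd_mul_right q (d i)).mul_left k)
    rw [← hcast, ← hP _ hres, h _ hk]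
  rw [Pi.zero_apply, hP x₀ fun _ => rfl]
  exact eval_eq_zero_of_frequently_eval_add_intCast_smul_eq_zero hline

end IsQuasiPolynomial

/-- If two quasi-polynomial functions on `ℤ^n` agree on all lattice points of a translate
`s + τ` of a nonempty open polyhedral cone `τ` (cut out by finitely many strict rational
linear inequalities), then they agree everywhere. -/
theorem quasiPolynomial_eq_of_eq_on_translated_cone
    {n : ℕ} (p₁ p₂ : (Fin n → ℤ) → ℚ)
    (h₁ : IsQuasiPolynomial p₁) (h₂ : IsQuasiPolynomial p₂)
    {ι : Type*} (A : Finset ι) (c : ι → Fin n → ℚ)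
    (τ : Set (Fin n → ℚ))
    (hτ : τ = {y | ∀ a ∈ A, 0 < ∑ i, c a i * y i})
    (hne : τ.Nonempty)
    (s : Fin n → ℚ)
    (hagree : ∀ x : Fin n → ℤ, (fun i => (x i : ℚ) - s i) ∈ τ → p₁ x = p₂ x) :
    p₁ = p₂ := by
  subst hτ
  have hzero := (h₁.sub h₂).eq_zero_of_forall_mem_translated_openCone hne s
    fun x hx => sub_eq_zero.mpr (hagree x hx)
  exact sub_eq_zero.mp hzero
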